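/- Let α₀ = (688 − 480√2)/49. For every real α with α₀ ≤ α ≤ 1/2, the tuple (a,b,c,d,e,f) = (1, 1, √(α/2), √(2α), 0, 0) is a general configuration for α, its double bubble perimeter 2(a+b+c+f)+(d+e) equals 4 + 2√(2α), and every general configuration for α has double bubble perimeter at least 4 + 2√(2α). -/
import Mathlib

/-- A general configuration for `α` (Figure 3 of the paper). -/
def IsGeneralConfig (α a b c d e f : ℝ) : Prop :=
  0 < a ∧ 0 < b ∧ 0 ≤ c ∧ 0 ≤ d ∧ 0 ≤ e ∧ 0 ≤ f ∧ d ≤ b ∧ e ≤ a ∧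
    ((a * b = 1 ∧ c * d + c * f + e * f = α) ∨
      (a * b = α ∧ c * d + c * f + e * f = 1))

private lemma sqrt2_sq : (Real.sqrt 2) ^ 2 = 2 := Real.sq_sqrt (by norm_num)

private lemma sqrt2_lb : (1.414 : ℝ) ≤ Real.sqrt 2 := by
  nlinarith [sqrt2_sq, Real.sqrt_nonneg 2]

private lemma sqrt2_ub : Real.sqrt 2 ≤ 1.4143 := by
  nlinarith [sqrt2_sq, Real.sqrt_nonneg 2]

/-- Case 1: the unit-area region is the rectangle. -/
private lemma db_case1 (t a b c d e f : ℝ)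
    (ha : 0 < a) (hb : 0 < b) (hc : 0 ≤ c) (hd : 0 ≤ d) (he : 0 ≤ e) (hf : 0 ≤ f)
    (hab : a * b = 1) (harea : c * d + c * f + e * f = t ^ 2 / 2) :
    4 + 2 * t ≤ 2 * (a + b + c + f) + (d + e) := by
  have h1 : 2 ≤ a + b := by nlinarith [sq_nonneg (a - b)]
  have h2 : 2 * t ≤ 2 * c + 2 * f + d + e := by
    nlinarith [sq_nonneg (2 * c - d), sq_nonneg (2 * f - e), mul_nonneg hc he,
      mul_nonneg hd hf, mul_nonneg hd he, sq_nonneg (2 * c + 2 * f + d + e - 2 * t),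
      mul_nonneg hc hd, mul_nonneg hc hf, mul_nonneg he hf]
  linarith

private lemma db_sq_le (x y : ℝ) (hy : 0 ≤ y) (h : x ^ 2 ≤ y ^ 2) : x ≤ y := by
  nlinarith [h, hy]

private lemma db_pos_cancel (x y : ℝ) (hx : 0 < x) (h : 0 ≤ x * y) : 0 ≤ y := by
  by_contra hn
  push_neg at hn
  nlinarith

/-- The one-variable inequality where `t₀ = (20√2-24)/7` enters:
if `q² = 2t²+4` then `4+(2-s)t ≤ 2q`. -/
private lemma db_tb (s t q : ℝ) (hs2 : s ^ 2 = 2) (hslb : (1.414 : ℝ) ≤ s)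
    (hsub : s ≤ 1.4143) (ht0 : (20 * s - 24) / 7 ≤ t) (htpos : 0 < t)
    (hq2 : q ^ 2 = 2 * t ^ 2 + 4) (hq0 : 0 < q) : 4 + (2 - s) * t ≤ 2 * q := by
  have h7 : (2 + 4 * s) * (20 * s - 24) = 7 * (16 - 8 * s) := by
    linear_combination 80 * hs2
  have hpos : (0:ℝ) ≤ (2 + 4 * s) * t := by nlinarith
  have hquad : (16 - 8 * s) * t ≤ (2 + 4 * s) * t ^ 2 := by
    nlinarith [mul_le_mul_of_nonneg_left ht0 hpos, h7]
  have hst2 : s ^ 2 * t ^ 2 = 2 * t ^ 2 := by rw [hs2]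
  apply db_sq_le _ _ (by positivity)
  nlinarith [hquad, hq2, hst2]

/-- Case 2, subcase A: `e*f ≤ c*(b-d)`. -/
private lemma db_caseA (t a b c d e f : ℝ)
    (ha : 0 < a) (hb : 0 < b) (hc0 : 0 < c) (hd : 0 ≤ d) (he : 0 ≤ e) (hf : 0 ≤ f)
    (hdb : d ≤ b) (htpos : 0 < t)
    (hab : 2 * (a * b) = t ^ 2) (harea : c * d + c * f + e * f = 1) (hcf : f ≤ c)
    (hA : e * f ≤ c * (b - d)) :
    4 + 2 * t ≤ 2 * (a + b + c + f) + (d + e) := by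
  have hab2 : 2 * t ≤ 2 * a + b := by
    apply db_sq_le _ _ (by linarith)
    nlinarith [sq_nonneg (2 * a - b)]
  have certA : c * (2 * (a + b + c + f) + (d + e) - (4 + 2 * t)) =
      c * (2 * a + b - 2 * t) + (c * (b - d) - e * f) + 2 * (c - 1) ^ 2
        + e * (c - f) + 2 * (c * d + c * f + e * f - 1) := by ring
  have h9 : 0 ≤ c * (2 * (a + b + c + f) + (d + e) - (4 + 2 * t)) := by
    rw [certA, harea]
    have t1 : 0 ≤ c * (2 * a + b - 2 * t) := mul_nonneg hc0.le (by linarith)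
    have t3 : 0 ≤ e * (c - f) := mul_nonneg he (by linarith)
    linarith [t1, t3, sq_nonneg (c - 1)]
  have := db_pos_cancel c _ hc0 h9
  linarith

/-- Case 2, subcase B2: `c*(b-d) ≤ e*f` and `f ≤ b`. -/
private lemma db_caseB2 (t a b c d e f p : ℝ)
    (ha : 0 < a) (hb : 0 < b) (hc : 0 ≤ c) (hd : 0 ≤ d) (he : 0 ≤ e) (hf0 : 0 < f)
    (hdb : d ≤ b) (htpos : 0 < t)
    (hab : 2 * (a * b) = t ^ 2) (hcf : f ≤ c)
    (hpdef : p = e * f - c * (b - d)) (hp0 : 0 ≤ p)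
    (hareap : c * b + c * f + p = 1) (hfb : f ≤ b) :
    4 + 2 * t ≤ 2 * (a + b + c + f) + (d + e) := by
  have hv0 : 0 < b + f := by linarith
  have hab2 : 2 * t ≤ 2 * a + b := by
    apply db_sq_le _ _ (by linarith)
    nlinarith [sq_nonneg (2 * a - b)]
  have hkey1 : f * b + p ≤ f * (d + e) := by
    rw [hpdef]
    nlinarith [mul_nonneg (sub_nonneg.mpr hcf) (sub_nonneg.mpr hdb)]
  have certB2 : (b + f) * (f * (2 * a + 3 * b + 2 * c + 2 * f - 4 - 2 * t) + p) =
      f * (b + f) * (2 * a + b - 2 * t) + p * (b - f) + 2 * f * (b + f - 1) ^ 2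
        + 2 * f * (c * b + c * f + p - 1) := by ring
  have hX : 0 ≤ (b + f) * (f * (2 * a + 3 * b + 2 * c + 2 * f - 4 - 2 * t) + p) := by
    rw [certB2, hareap]
    have t1 : 0 ≤ f * (b + f) * (2 * a + b - 2 * t) :=
      mul_nonneg (mul_nonneg hf0.le hv0.le) (by linarith)
    have t2 : 0 ≤ p * (b - f) := mul_nonneg hp0 (by linarith)
    have t3 : 0 ≤ 2 * f * (b + f - 1) ^ 2 := mul_nonneg (by linarith) (sq_nonneg _)
    linarith [t1, t2, t3]
  have hX2 : 0 ≤ f * (2 * a + 3 * b + 2 * c + 2 * f - 4 - 2 * t) + p :=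
    db_pos_cancel (b + f) _ hv0 hX
  have h9 : 0 ≤ f * (2 * (a + b + c + f) + (d + e) - (4 + 2 * t)) := by
    have cert : f * (2 * (a + b + c + f) + (d + e) - (4 + 2 * t)) =
        (f * (d + e) - (f * b + p))
          + (f * (2 * a + 3 * b + 2 * c + 2 * f - 4 - 2 * t) + p) := by ring
    rw [cert]; linarith [hX2, hkey1]
  have := db_pos_cancel f _ hf0 h9
  linarith

set_option maxHeartbeats 800000 in
/-- Case 2, subcase B1: `c*(b-d) ≤ e*f` and `b ≤ f`. -/
private lemma db_caseB1 (s t a b c d e f p : ℝ) (hs2 : s ^ 2 = 2)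
    (hslb : (1.414 : ℝ) ≤ s) (hsub : s ≤ 1.4143)
    (ht0 : (20 * s - 24) / 7 ≤ t) (ht1 : t ≤ 1)
    (ha : 0 < a) (hb : 0 < b) (hc : 0 ≤ c) (hd : 0 ≤ d) (he : 0 ≤ e) (hf0 : 0 < f)
    (hdb : d ≤ b) (htpos : 0 < t)
    (hab : 2 * (a * b) = t ^ 2) (hcf : f ≤ c)
    (hpdef : p = e * f - c * (b - d)) (hp0 : 0 ≤ p) (hpaf : p ≤ a * f)
    (hareap : c * b + c * f + p = 1) (hbf : b ≤ f) :
    4 + 2 * t ≤ 2 * (a + b + c + f) + (d + e) := by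
  have hv0 : 0 < b + f := by linarith
  have hkey1 : f * b + p ≤ f * (d + e) := by
    rw [hpdef]
    nlinarith [mul_nonneg (sub_nonneg.mpr hcf) (sub_nonneg.mpr hdb)]
  obtain ⟨m, hmv, hm0⟩ : ∃ m : ℝ, m * (b + f) = t ^ 2 / 2 + 1 ∧ 0 < m :=
    ⟨(t ^ 2 / 2 + 1) / (b + f), div_mul_cancel₀ _ (ne_of_gt hv0), by positivity⟩
  obtain ⟨q, hq2, hq0⟩ : ∃ q : ℝ, q ^ 2 = 2 * t ^ 2 + 4 ∧ 0 < q :=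
    ⟨Real.sqrt (2 * t ^ 2 + 4), Real.sq_sqrt (by positivity),
      Real.sqrt_pos.mpr (by positivity)⟩
  have hAM : q ≤ m + (b + f) := by
    apply db_sq_le _ _ (by linarith)
    nlinarith [sq_nonneg (m - (b + f)), hmv, hq2]
  have hst2 : s ^ 2 * t ^ 2 = 2 * t ^ 2 := by rw [hs2]
  have habst : s * t ≤ a + b := by
    apply db_sq_le _ _ (by linarith)
    nlinarith [sq_nonneg (a - b), hab, hst2]
  have hfinal : 4 + (2 - s) * t ≤ 2 * q := db_tb s t q hs2 hslb hsub ht0 htpos hq2 hq0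
  have hkeyeq : (f * (a + 2 * c) + p) * (b + f) - 2 * (m * f) * (b + f)
      = (f - b) * (a * f - p) := by
    linear_combination f * hab + 2 * f * hareap - 2 * f * hmv
  have h5 : 0 ≤ (f - b) * (a * f - p) :=
    mul_nonneg (by linarith) (by linarith)
  have hclaim : 2 * (m * f) ≤ f * (a + 2 * c) + p := by
    have h6 : 0 ≤ (b + f) * (f * (a + 2 * c) + p - 2 * (m * f)) := by
      rw [show (b + f) * (f * (a + 2 * c) + p - 2 * (m * f)) =
        (f * (a + 2 * c) + p) * (b + f) - 2 * (m * f) * (b + f) by ring, hkeyeq]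
      exact h5
    linarith [db_pos_cancel (b + f) _ hv0 h6]
  have b1 : 0 ≤ f * (a + b - s * t) := mul_nonneg hf0.le (by linarith)
  have b2 : 0 ≤ f * (m + (b + f) - q) := mul_nonneg hf0.le (by linarith)
  have b3 : 0 ≤ f * (s * t + 2 * q - 4 - 2 * t) := mul_nonneg hf0.le (by linarith)
  have certB1 : f * (2 * (a + b + c + f) + (d + e) - (4 + 2 * t)) =
      (f * (d + e) - (f * b + p)) + (f * (a + 2 * c) + p - 2 * (m * f))
        + f * (a + b - s * t) + 2 * (f * (m + (b + f) - q))
        + f * (s * t + 2 * q - 4 - 2 * t) := by ring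
  have h9 : 0 ≤ f * (2 * (a + b + c + f) + (d + e) - (4 + 2 * t)) := by
    rw [certB1]; linarith [hkey1, hclaim, b1, b2, b3]
  have := db_pos_cancel f _ hf0 h9
  linarith

/-- Case 2 with the symmetry-breaking assumption `f ≤ c`. -/
private lemma db_case2_main (s t a b c d e f : ℝ) (hs2 : s ^ 2 = 2) (hs0 : 0 ≤ s)
    (ht0 : (20 * s - 24) / 7 ≤ t) (ht1 : t ≤ 1)
    (ha : 0 < a) (hb : 0 < b) (hc : 0 ≤ c) (hd : 0 ≤ d) (he : 0 ≤ e) (hf : 0 ≤ f)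
    (hdb : d ≤ b) (hea : e ≤ a)
    (hab : 2 * (a * b) = t ^ 2) (harea : c * d + c * f + e * f = 1) (hcf : f ≤ c) :
    4 + 2 * t ≤ 2 * (a + b + c + f) + (d + e) := by
  have hslb : (1.414 : ℝ) ≤ s := by nlinarith
  have hsub : s ≤ 1.4143 := by nlinarith
  have htpos : 0 < t := lt_of_lt_of_le (by nlinarith) ht0
  have hc0 : 0 < c := by
    rcases hc.lt_or_eq with h | h
    · exact h
    · exfalso
      have hf0 : f = 0 := le_antisymm (h ▸ hcf) hf
      rw [← h, hf0] at harea; simp at harea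
  rcases le_or_gt (e * f) (c * (b - d)) with hA | hB
  · exact db_caseA t a b c d e f ha hb hc0 hd he hf hdb htpos hab harea hcf hA
  · have hf0 : 0 < f := by
      rcases hf.lt_or_eq with h | h
      · exact h
      · exfalso
        have : e * f = 0 := by rw [← h]; ring
        nlinarith [mul_nonneg hc (sub_nonneg.mpr hdb)]
    have hp0 : 0 ≤ e * f - c * (b - d) := by linarith
    have hpaf : e * f - c * (b - d) ≤ a * f := by
      nlinarith [mul_nonneg hc (sub_nonneg.mpr hdb),
        mul_le_mul_of_nonneg_right hea hf]
    have hareap : c * b + c * f + (e * f - c * (b - d)) = 1 := by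
      linear_combination harea
    rcases le_total f b with hfb | hbf
    · exact db_caseB2 t a b c d e f (e * f - c * (b - d)) ha hb hc hd he hf0 hdb
        htpos hab hcf rfl hp0 hareap hfb
    · exact db_caseB1 s t a b c d e f (e * f - c * (b - d)) hs2 hslb hsub ht0 ht1
        ha hb hc hd he hf0 hdb htpos hab hcf rfl hp0 hpaf hareap hbf

/-- Case 2 in general (by the swap symmetry). -/
private lemma db_case2 (s t a b c d e f : ℝ) (hs2 : s ^ 2 = 2) (hs0 : 0 ≤ s)
    (ht0 : (20 * s - 24) / 7 ≤ t) (ht1 : t ≤ 1)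
    (ha : 0 < a) (hb : 0 < b) (hc : 0 ≤ c) (hd : 0 ≤ d) (he : 0 ≤ e) (hf : 0 ≤ f)
    (hdb : d ≤ b) (hea : e ≤ a)
    (hab : 2 * (a * b) = t ^ 2) (harea : c * d + c * f + e * f = 1) :
    4 + 2 * t ≤ 2 * (a + b + c + f) + (d + e) := by
  rcases le_total f c with h | h
  · exact db_case2_main s t a b c d e f hs2 hs0 ht0 ht1 ha hb hc hd he hf hdb hea
      hab harea h
  · have := db_case2_main s t b a f e d c hs2 hs0 ht0 ht1 hb ha hf he hd hc hea hdb
      (by rw [mul_comm b a]; exact hab) (by linear_combination harea) h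
    linarith

/-- **Theorem 1.1, part III (middle regime).** For `(688−480√2)/49 ≤ α ≤ 1/2`, a unit
square kissing a `√(2α) × √(α/2)` rectangle is a general configuration of double bubble
perimeter `4 + 2√(2α)`, and this is minimal among all general configurations. -/
theorem general_case_attained_mid (α : ℝ)
    (h0 : (688 - 480 * Real.sqrt 2) / 49 ≤ α) (h1 : α ≤ 1 / 2) :
    IsGeneralConfig α 1 1 (Real.sqrt (α / 2)) (Real.sqrt (2 * α)) 0 0 ∧
      2 * (1 + 1 + Real.sqrt (α / 2) + 0) + (Real.sqrt (2 * α) + 0) =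
        4 + 2 * Real.sqrt (2 * α) ∧
      ∀ a b c d e f : ℝ, IsGeneralConfig α a b c d e f →
        4 + 2 * Real.sqrt (2 * α) ≤ 2 * (a + b + c + f) + (d + e) := by
  have hs2 := sqrt2_sq
  have hs0 := Real.sqrt_nonneg 2
  have hslb := sqrt2_lb
  have hsub := sqrt2_ub
  have hα0 : 0 < α := lt_of_lt_of_le (by nlinarith) h0
  have ht2 : (Real.sqrt (2 * α)) ^ 2 = 2 * α := Real.sq_sqrt (by linarith)
  have ht0' : 0 ≤ Real.sqrt (2 * α) := Real.sqrt_nonneg _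
  have htpos : 0 < Real.sqrt (2 * α) := Real.sqrt_pos.mpr (by linarith)
  have ht1 : Real.sqrt (2 * α) ≤ 1 := by
    rw [show (1:ℝ) = Real.sqrt 1 by rw [Real.sqrt_one]]
    exact Real.sqrt_le_sqrt (by linarith)
  have ht0 : (20 * Real.sqrt 2 - 24) / 7 ≤ Real.sqrt (2 * α) := by
    have htt : ((20 * Real.sqrt 2 - 24) / 7) ^ 2 ≤ (Real.sqrt (2 * α)) ^ 2 := by
      rw [ht2]; nlinarith [hs2, h0]
    have ht00 : 0 < (20 * Real.sqrt 2 - 24) / 7 := by linarith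
    nlinarith [htt, ht0', ht00]
  have hc_eq : Real.sqrt (α / 2) * Real.sqrt (2 * α) = α := by
    rw [← Real.sqrt_mul (by positivity : (0:ℝ) ≤ α / 2),
      show α / 2 * (2 * α) = α ^ 2 by ring, Real.sqrt_sq hα0.le]
  have hhalf : 2 * Real.sqrt (α / 2) = Real.sqrt (2 * α) := by
    rw [show (2:ℝ) * α = 2 ^ 2 * (α / 2) by ring,
      Real.sqrt_mul (by norm_num : (0:ℝ) ≤ (2:ℝ) ^ 2),
      Real.sqrt_sq (by norm_num : (0:ℝ) ≤ (2:ℝ))]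
  refine ⟨⟨one_pos, one_pos, Real.sqrt_nonneg _, ht0', le_refl 0,
      le_refl 0, ht1, zero_le_one, Or.inl ⟨one_mul 1, ?_⟩⟩, by linarith [hhalf], ?_⟩
  · rw [mul_zero, zero_mul, add_zero, add_zero]; exact hc_eq
  · intro a b c d e f hcfg
    obtain ⟨ha, hb, hc, hd, he, hf, hdb, hea, hor⟩ := hcfg
    rcases hor with ⟨hab, harea⟩ | ⟨hab, harea⟩
    · exact db_case1 (Real.sqrt (2 * α)) a b c d e f ha hb hc hd he hf hab
        (by rw [harea]; linarith [ht2])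
    · exact db_case2 (Real.sqrt 2) (Real.sqrt (2 * α)) a b c d e f hs2 hs0 ht0 ht1
        ha hb hc hd he hf hdb hea (by rw [hab]; linarith [ht2]) harea
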